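/- For every δ ∈ (0,1/3) there exists C = C(δ) < ∞ such that for all integers 1 ≤ r ≤ T < ∞, every λ > 0, all reals a ≤ δ⁻¹ and b < δ⁻¹ satisfying |b − a|·r/T ≤ δ⁻¹·(a⁻ + 1)^{1−δ}, and every δ-decorated random walk bridge (S_k)_{k=0}^T, (D_k)_{k=1}^T from a to b of length T, one has | E[ S_r⁻ · 1{ max_{1 ≤ k ≤ r}(S_k + D_k) ≤ λ } ] − E[ S_r⁻ · 1{ max_{1 ≤ k ≤ r}(S_k + D_k) ≤ −λ } ] | ≤ C·(a⁻ + 1)·r·( max_{1 ≤ k ≤ r} P( −λ < S_k + D_k ≤ λ ) )^{1/2}. -/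

import Mathlib

/-!
The two expectations differ only on the event that the walk `S_k + D_k`, `k ≤ r`, stays below
`λ` but not below `-λ`; on it some `S_k + D_k` lies in `(-λ, λ]`, so by a union bound its
probability is at most `r · max_k P(-λ < S_k + D_k ≤ λ)`. Cauchy–Schwarz bounds the difference by
`E[(S_r⁻)²]^{1/2}` times the square root of that probability. Finally `S_r` is Gaussian with
variance `s_r (s_T - s_r) / s_T ≤ δ⁻¹ r` and mean `a + (b - a) s_r / s_T`, whose negative part is
`O(a⁻ + 1)` thanks to the hypothesis on `|b - a| r / T`; hence `E[(S_r⁻)²] = O((a⁻ + 1)² r)`.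
-/

open MeasureTheory ProbabilityTheory

noncomputable section

/-- The negative part `x⁻ = max (-x) 0` of a real number. -/
def nneg (x : ℝ) : ℝ := max (-x) 0

/-- Partial sums `s j = σ²₁ + ⋯ + σ²ⱼ` of the step variances. -/
def psum (σsq : ℕ → ℝ) (j : ℕ) : ℝ := ∑ i ∈ Finset.Icc 1 j, σsq i

/-- A `δ`-decorated random walk bridge from `a` to `b` of length `T` on `(Ω, P)`:
step variances `σsq k ∈ (δ, δ⁻¹)`; `(S k)` a Gaussian process with the bridge mean and
covariance structure (A1); the Markov-type conditional independence property (A2); and the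
stretched-exponential decoration tails (A3). -/
structure DecoratedBridge (δ : ℝ) (T : ℕ) (a b : ℝ)
    {Ω : Type*} [MeasurableSpace Ω] (P : Measure Ω) where
  σsq : ℕ → ℝ
  S : ℕ → Ω → ℝ
  D : ℕ → Ω → ℝ
  meas_S : ∀ k, Measurable (S k)
  meas_D : ∀ k, Measurable (D k)
  σsq_mem : ∀ k, 1 ≤ k → k ≤ T → σsq k ∈ Set.Ioo δ δ⁻¹
  gaussian_lin : ∀ c : ℕ → ℝ, ∃ (m : ℝ) (v : NNReal),
    P.map (fun ω => ∑ k ∈ Finset.range (T + 1), c k * S k ω) = gaussianReal m v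
  mean_S : ∀ k, k ≤ T →
    ∫ ω, S k ω ∂P = (b * psum σsq k + a * (psum σsq T - psum σsq k)) / psum σsq T
  cov_S : ∀ k m, k ≤ m → m ≤ T →
    ∫ ω, (S k ω - ∫ ω', S k ω' ∂P) * (S m ω - ∫ ω', S m ω' ∂P) ∂P
      = psum σsq k * (psum σsq T - psum σsq m) / psum σsq T
  condIndep : ∀ m, 1 ≤ m → m ≤ T - 1 → ∀ A B : Set Ω,
    MeasurableSet[MeasurableSpace.comap
      (fun ω => fun k : Finset.Icc 1 m => (S k.1 ω, D k.1 ω)) inferInstance] A →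
    MeasurableSet[MeasurableSpace.comap
      (fun ω => fun k : Set.Ioc m T => S k.1 ω) inferInstance] B →
    MeasureTheory.condExp (MeasurableSpace.comap (S m) inferInstance) P
        ((A ∩ B).indicator fun _ => (1 : ℝ))
      =ᵐ[P] fun ω =>
        MeasureTheory.condExp (MeasurableSpace.comap (S m) inferInstance) P
          (A.indicator fun _ => (1 : ℝ)) ω *
        MeasureTheory.condExp (MeasurableSpace.comap (S m) inferInstance) P
          (B.indicator fun _ => (1 : ℝ)) ω
  dec_tail : ∀ k, 1 ≤ k → k ≤ T → ∀ t : ℝ, 0 < t →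
    (P {ω | δ⁻¹ * ((min k (T - k) : ℕ) : ℝ) ^ ((1 : ℝ) / 2 - δ) + t < |D k ω|}).toReal
      ≤ δ⁻¹ * Real.exp (-t ^ δ)


open scoped ENNReal

lemma nneg_nonneg (x : ℝ) : 0 ≤ nneg x := le_max_right _ _

lemma nneg_add_le_add_abs (x y : ℝ) : nneg (x + y) ≤ nneg x + |y| := by
  unfold nneg
  rcases le_total (-(x + y)) 0 with h | h
  · rw [max_eq_right h]; positivity
  · rw [max_eq_left h]
    linarith [le_max_left (-x) 0, neg_abs_le y]

lemma nneg_sq_le (x y : ℝ) : nneg x ^ 2 ≤ 2 * (x - y) ^ 2 + 2 * nneg y ^ 2 := by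
  have h : nneg x ≤ |x - y| + nneg y := by
    simpa [add_comm] using nneg_add_le_add_abs y (x - y)
  calc nneg x ^ 2 ≤ (|x - y| + nneg y) ^ 2 := pow_le_pow_left₀ (nneg_nonneg x) h 2
    _ ≤ 2 * (x - y) ^ 2 + 2 * nneg y ^ 2 := by
      nlinarith [sq_abs (x - y), sq_nonneg (|x - y| - nneg y)]

section Probability

variable {Ω : Type*} [MeasurableSpace Ω] {P : Measure Ω}

theorem MeasureTheory.MemLp.nneg {X : Ω → ℝ} {p : ENNReal} (hX : MemLp X p P) :
    MemLp (fun ω => nneg (X ω)) p P :=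
  hX.neg_part

theorem integral_nneg_sq_le [IsProbabilityMeasure P] {X : Ω → ℝ} (hX : MemLp X 2 P) :
    ∫ ω, nneg (X ω) ^ 2 ∂P ≤ 2 * Var[X; P] + 2 * nneg (P[X]) ^ 2 := by
  have hsq : Integrable (fun ω => (X ω - P[X]) ^ 2) P :=
    (hX.sub (memLp_const (p := 2) P[X])).integrable_sq
  have hcentered : Integrable (fun ω => 2 * (X ω - P[X]) ^ 2) P := hsq.const_mul 2
  calc ∫ ω, nneg (X ω) ^ 2 ∂P ≤ ∫ ω, (2 * (X ω - P[X]) ^ 2 + 2 * nneg P[X] ^ 2) ∂P :=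
        integral_mono hX.nneg.integrable_sq (hcentered.add (integrable_const _))
          fun ω => nneg_sq_le (X ω) P[X]
    _ = 2 * Var[X; P] + 2 * nneg P[X] ^ 2 := by
      rw [integral_add hcentered (integrable_const _), integral_const_mul, integral_const,
        variance_eq_integral hX.aemeasurable]
      simp

theorem integral_mul_indicator_le_sqrt {f : Ω → ℝ} (hf0 : 0 ≤ f) (hf : MemLp f 2 P)
    {s : Set Ω} (hs : MeasurableSet s) (hPs : P s ≠ ⊤) :
    ∫ ω, f ω * s.indicator (fun _ => (1 : ℝ)) ω ∂P ≤ √((∫ ω, f ω ^ 2 ∂P) * P.real s) := by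
  have hind : MemLp (s.indicator fun _ => (1 : ℝ)) (ENNReal.ofReal 2) P := by
    simpa using memLp_indicator_const 2 hs (1 : ℝ) (Or.inr hPs)
  have := integral_mul_le_Lp_mul_Lq_of_nonneg Real.HolderConjugate.two_two
    (ae_of_all _ hf0) (ae_of_all _ (Set.indicator_nonneg (fun _ _ => zero_le_one)))
    (by simpa using hf) hind
  simp only [Real.rpow_two] at this
  have hind_sq : ∫ ω, s.indicator (fun _ => (1 : ℝ)) ω ^ 2 ∂P = P.real s := by
    have : (fun ω => s.indicator (fun _ => (1 : ℝ)) ω ^ 2) = s.indicator (fun _ => (1 : ℝ)) := by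
      ext ω; by_cases h : ω ∈ s <;> simp [h]
    rw [this]
    exact integral_indicator_one hs
  rw [hind_sq, ← Real.sqrt_eq_rpow, ← Real.sqrt_eq_rpow,
    ← Real.sqrt_mul (integral_nonneg fun ω => sq_nonneg (f ω))] at this
  exact this

end Probability

section Barrier

variable {Ω : Type*}

def stayBelow (X : ℕ → Ω → ℝ) (r : ℕ) (c : ℝ) : Set Ω :=
  {ω | ∀ k, 1 ≤ k → k ≤ r → X k ω ≤ c}

variable {X : ℕ → Ω → ℝ} {r : ℕ}

theorem stayBelow_mono {c c' : ℝ} (h : c ≤ c') : stayBelow X r c ⊆ stayBelow X r c' :=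
  fun _ hω k hk hkr => (hω k hk hkr).trans h

theorem stayBelow_diff_subset (c : ℝ) :
    stayBelow X r c \ stayBelow X r (-c) ⊆ ⋃ k ∈ Finset.Icc 1 r, {ω | -c < X k ω ∧ X k ω ≤ c} := by
  rintro ω ⟨hc, hnc⟩
  obtain ⟨k, hk, hkr, hlt⟩ : ∃ k, 1 ≤ k ∧ k ≤ r ∧ -c < X k ω := by simpa [stayBelow] using hnc
  exact Set.mem_biUnion (Finset.mem_Icc.mpr ⟨hk, hkr⟩) ⟨hlt, hc k hk hkr⟩

variable [MeasurableSpace Ω] {P : Measure Ω}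

theorem measurableSet_stayBelow (hX : ∀ k, Measurable (X k)) (c : ℝ) :
    MeasurableSet (stayBelow X r c) := by
  have : stayBelow X r c = ⋂ k ∈ Finset.Icc 1 r, {ω | X k ω ≤ c} := by
    ext ω; simp [stayBelow, and_imp]
  rw [this]
  exact Finset.measurableSet_biInter _ fun k _ => measurableSet_le (hX k) measurable_const

theorem measureReal_stayBelow_diff_le [IsFiniteMeasure P] (c : ℝ) (hr : 1 ≤ r) :
    P.real (stayBelow X r c \ stayBelow X r (-c)) ≤
      r * (Finset.Icc 1 r).sup' (Finset.nonempty_Icc.mpr hr)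
        fun k => P.real {ω | -c < X k ω ∧ X k ω ≤ c} := by
  calc P.real (stayBelow X r c \ stayBelow X r (-c))
      ≤ ∑ k ∈ Finset.Icc 1 r, P.real {ω | -c < X k ω ∧ X k ω ≤ c} :=
        (measureReal_mono (stayBelow_diff_subset c) (measure_ne_top P _)).trans
          (measureReal_biUnion_finset_le _ _)
    _ ≤ (Finset.Icc 1 r).card • (Finset.Icc 1 r).sup' (Finset.nonempty_Icc.mpr hr)
        fun k => P.real {ω | -c < X k ω ∧ X k ω ≤ c} :=
        Finset.sum_le_card_nsmul _ _ _ fun k hk =>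
          Finset.le_sup' (fun k => P.real {ω | -c < X k ω ∧ X k ω ≤ c}) hk
    _ = _ := by simp

theorem integral_mul_indicator_sub_of_subset {f : Ω → ℝ} (hf : Integrable f P) {A B : Set Ω}
    (hA : MeasurableSet A) (hB : MeasurableSet B) (hBA : B ⊆ A) :
    ∫ ω, f ω * A.indicator (fun _ => (1 : ℝ)) ω ∂P - ∫ ω, f ω * B.indicator (fun _ => (1 : ℝ)) ω ∂P
      = ∫ ω, f ω * (A \ B).indicator (fun _ => (1 : ℝ)) ω ∂P := by
  have hint : ∀ s, MeasurableSet s →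
      Integrable (fun ω => f ω * s.indicator (fun _ => (1 : ℝ)) ω) P := fun s hs => by
    simpa only [← Set.indicator_mul_right, mul_one] using hf.indicator hs
  rw [← integral_sub (hint A hA) (hint B hB)]
  congr 1 with ω
  rw [Set.indicator_sdiff hBA, Pi.sub_apply, mul_sub]

theorem abs_integral_mul_indicator_stayBelow_sub_le [IsFiniteMeasure P]
    (hX : ∀ k, Measurable (X k)) {f : Ω → ℝ} (hf0 : 0 ≤ f) (hf : MemLp f 2 P) {c : ℝ}
    (hc : 0 ≤ c) (hr : 1 ≤ r) :
    |∫ ω, f ω * (stayBelow X r c).indicator (fun _ => (1 : ℝ)) ω ∂P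
        - ∫ ω, f ω * (stayBelow X r (-c)).indicator (fun _ => (1 : ℝ)) ω ∂P|
      ≤ √((∫ ω, f ω ^ 2 ∂P) * (r * (Finset.Icc 1 r).sup' (Finset.nonempty_Icc.mpr hr)
          fun k => P.real {ω | -c < X k ω ∧ X k ω ≤ c})) := by
  have hc_meas := measurableSet_stayBelow (r := r) hX c
  have hnc_meas := measurableSet_stayBelow (r := r) hX (-c)
  rw [integral_mul_indicator_sub_of_subset (hf.integrable one_le_two) hc_meas hnc_meas
    (stayBelow_mono (by linarith)), abs_of_nonneg (integral_nonneg fun ω =>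
      mul_nonneg (hf0 ω) (Set.indicator_nonneg (fun _ _ => zero_le_one) ω))]
  refine (integral_mul_indicator_le_sqrt hf0 hf (hc_meas.diff hnc_meas) (measure_ne_top P _)).trans
    ?_
  exact Real.sqrt_le_sqrt (mul_le_mul_of_nonneg_left (measureReal_stayBelow_diff_le c hr)
    (integral_nonneg fun ω => sq_nonneg (f ω)))

end Barrier

namespace DecoratedBridge

variable {δ : ℝ} {T : ℕ} {a b : ℝ} {Ω : Type*} [MeasurableSpace Ω] {P : Measure Ω}
  (B : DecoratedBridge δ T a b P)

theorem mul_le_psum {k : ℕ} (hk : k ≤ T) : δ * k ≤ psum B.σsq k := by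
  have := Finset.card_nsmul_le_sum (Finset.Icc 1 k) B.σsq δ fun i hi =>
    (B.σsq_mem i (Finset.mem_Icc.mp hi).1 ((Finset.mem_Icc.mp hi).2.trans hk)).1.le
  simpa [psum, mul_comm] using this

theorem psum_le_mul {k : ℕ} (hk : k ≤ T) : psum B.σsq k ≤ δ⁻¹ * k := by
  have := Finset.sum_le_card_nsmul (Finset.Icc 1 k) B.σsq δ⁻¹ fun i hi =>
    (B.σsq_mem i (Finset.mem_Icc.mp hi).1 ((Finset.mem_Icc.mp hi).2.trans hk)).2.le
  simpa [psum, mul_comm] using this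

theorem psum_mono (hδ : 0 ≤ δ) {k m : ℕ} (hkm : k ≤ m) (hm : m ≤ T) :
    psum B.σsq k ≤ psum B.σsq m :=
  Finset.sum_le_sum_of_subset_of_nonneg (Finset.Icc_subset_Icc_right hkm) fun i hi _ =>
    hδ.trans (B.σsq_mem i (Finset.mem_Icc.mp hi).1 ((Finset.mem_Icc.mp hi).2.trans hm)).1.le

theorem memLp_S {k : ℕ} (hk : k ≤ T) {p : ℝ≥0∞} (hp : p ≠ ∞) : MemLp (B.S k) p P := by
  obtain ⟨m, v, hmap⟩ := B.gaussian_lin fun j => if j = k then 1 else 0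
  have hsum :
      (fun ω => ∑ j ∈ Finset.range (T + 1), (if j = k then 1 else 0) * B.S j ω) = B.S k := by
    funext ω
    simp [Finset.mem_range, Nat.lt_succ_of_le hk]
  rw [hsum] at hmap
  have := memLp_id_gaussianReal' (μ := m) (v := v) p hp
  rw [← hmap] at this
  exact this.comp_of_map (B.meas_S k).aemeasurable

theorem variance_S {k : ℕ} (hk : k ≤ T) :
    Var[B.S k; P] = psum B.σsq k * (psum B.σsq T - psum B.σsq k) / psum B.σsq T := by
  rw [variance_eq_integral (B.meas_S k).aemeasurable, ← B.cov_S k k le_rfl hk]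
  simp only [sq]

theorem variance_S_le (hδ : 0 ≤ δ) {k : ℕ} (hk : k ≤ T) : Var[B.S k; P] ≤ δ⁻¹ * k := by
  rw [B.variance_S hk]
  refine le_trans ?_ (B.psum_le_mul hk)
  have hk0 : 0 ≤ psum B.σsq k := (mul_nonneg hδ k.cast_nonneg).trans (B.mul_le_psum hk)
  have hkT := B.psum_mono hδ hk le_rfl
  rcases hkT.lt_or_eq with hlt | heq
  · rw [div_le_iff₀ (hk0.trans_lt hlt)]
    nlinarith
  · simp [← heq, hk0]

theorem integral_S {k : ℕ} (hk : k ≤ T) (hT : psum B.σsq T ≠ 0) :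
    P[B.S k] = a + (b - a) * (psum B.σsq k / psum B.σsq T) := by
  rw [B.mean_S k hk]
  field_simp
  ring

theorem nneg_integral_S_le (hδ : 0 < δ) {r : ℕ} (hr : 1 ≤ r) (hrT : r ≤ T)
    (hba : |b - a| * r / T ≤ δ⁻¹ * (nneg a + 1) ^ (1 - δ)) :
    nneg P[B.S r] ≤ (1 + δ⁻¹ ^ 3) * (nneg a + 1) := by
  have hT : (0 : ℝ) < T := by exact_mod_cast hr.trans hrT
  have hsT : δ * T ≤ psum B.σsq T := B.mul_le_psum le_rfl
  have hsT0 : 0 < psum B.σsq T := (mul_pos hδ hT).trans_le hsT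
  have hratio0 : 0 ≤ psum B.σsq r / psum B.σsq T :=
    div_nonneg ((mul_nonneg hδ.le r.cast_nonneg).trans (B.mul_le_psum hrT)) hsT0.le
  have hratio : psum B.σsq r / psum B.σsq T ≤ δ⁻¹ ^ 2 * (r / T) :=
    calc psum B.σsq r / psum B.σsq T ≤ δ⁻¹ * r / (δ * T) :=
          div_le_div₀ (by positivity) (B.psum_le_mul hrT) (by positivity) hsT
      _ = δ⁻¹ ^ 2 * (r / T) := by field_simp
  have hpow : (nneg a + 1) ^ (1 - δ) ≤ nneg a + 1 :=
    Real.rpow_le_self_of_one_le (by linarith [nneg_nonneg a]) (by linarith)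
  calc nneg P[B.S r] = nneg (a + (b - a) * (psum B.σsq r / psum B.σsq T)) := by
        rw [B.integral_S hrT hsT0.ne']
    _ ≤ nneg a + |(b - a) * (psum B.σsq r / psum B.σsq T)| := nneg_add_le_add_abs _ _
    _ = nneg a + |b - a| * (psum B.σsq r / psum B.σsq T) := by
        rw [abs_mul, abs_of_nonneg hratio0]
    _ ≤ nneg a + δ⁻¹ ^ 2 * (|b - a| * r / T) := by
        have := mul_le_mul_of_nonneg_left hratio (abs_nonneg (b - a))
        linarith [show |b - a| * (δ⁻¹ ^ 2 * (r / T)) = δ⁻¹ ^ 2 * (|b - a| * r / T) by ring]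
    _ ≤ nneg a + δ⁻¹ ^ 2 * (δ⁻¹ * (nneg a + 1)) := by
        gcongr
        exact hba.trans (mul_le_mul_of_nonneg_left hpow (by positivity))
    _ ≤ (1 + δ⁻¹ ^ 3) * (nneg a + 1) := by nlinarith

theorem integral_nneg_S_sq_le [IsProbabilityMeasure P] (hδ : 0 < δ) {r : ℕ} (hr : 1 ≤ r)
    (hrT : r ≤ T) (hba : |b - a| * r / T ≤ δ⁻¹ * (nneg a + 1) ^ (1 - δ)) :
    ∫ ω, nneg (B.S r ω) ^ 2 ∂P ≤ (2 * δ⁻¹ + 2 * (1 + δ⁻¹ ^ 3) ^ 2) * ((nneg a + 1) ^ 2 * r) := by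
  have hr1 : (1 : ℝ) ≤ r := by exact_mod_cast hr
  have ha1 : 1 ≤ nneg a + 1 := by linarith [nneg_nonneg a]
  have hmean := B.nneg_integral_S_le hδ hr hrT hba
  have hvar := B.variance_S_le hδ.le hrT
  calc ∫ ω, nneg (B.S r ω) ^ 2 ∂P ≤ 2 * Var[B.S r; P] + 2 * nneg P[B.S r] ^ 2 :=
        integral_nneg_sq_le (B.memLp_S hrT ENNReal.ofNat_ne_top)
    _ ≤ 2 * (δ⁻¹ * r) + 2 * ((1 + δ⁻¹ ^ 3) * (nneg a + 1)) ^ 2 := by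
        gcongr
        exact nneg_nonneg _
    _ ≤ _ := by
        have hA2 : 1 ≤ (nneg a + 1) ^ 2 := one_le_pow₀ ha1
        have hK : 0 ≤ δ⁻¹ := by positivity
        nlinarith [mul_le_mul_of_nonneg_left hA2 (mul_nonneg hK (zero_le_one.trans hr1)),
          mul_le_mul_of_nonneg_left hr1 (sq_nonneg ((1 + δ⁻¹ ^ 3) * (nneg a + 1)))]

end DecoratedBridge

/-- continuity of the ballot functional in the level of the barrier. -/
theorem drw_ell_level_continuity (δ : ℝ) (hδ : δ ∈ Set.Ioo (0 : ℝ) (1 / 3)) :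
    ∃ C : ℝ, 0 < C ∧
      ∀ (r T : ℕ) (hr : 1 ≤ r), r ≤ T → ∀ lam : ℝ, 0 < lam →
      ∀ a b : ℝ, a ≤ δ⁻¹ → b < δ⁻¹ →
        |b - a| * r / T ≤ δ⁻¹ * (nneg a + 1) ^ (1 - δ) →
      ∀ (Ω : Type) [MeasurableSpace Ω] (P : Measure Ω) [IsProbabilityMeasure P]
        (B : DecoratedBridge δ T a b P),
      |(∫ ω, nneg (B.S r ω) *
            Set.indicator {ω' | ∀ k, 1 ≤ k → k ≤ r → B.S k ω' + B.D k ω' ≤ lam}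
              (fun _ => (1 : ℝ)) ω ∂P)
          - ∫ ω, nneg (B.S r ω) *
              Set.indicator {ω' | ∀ k, 1 ≤ k → k ≤ r → B.S k ω' + B.D k ω' ≤ -lam}
                (fun _ => (1 : ℝ)) ω ∂P|
        ≤ C * (nneg a + 1) * r *
          Real.sqrt ((Finset.Icc 1 r).sup' (Finset.nonempty_Icc.mpr hr) fun k =>
            (P {ω | -lam < B.S k ω + B.D k ω ∧ B.S k ω + B.D k ω ≤ lam}).toReal) := by
  obtain ⟨hδ0, -⟩ := hδ
  set Q := 2 * δ⁻¹ + 2 * (1 + δ⁻¹ ^ 3) ^ 2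
  refine ⟨√Q, by positivity, ?_⟩
  intro r T hr hrT lam hlam a b _ _ hba Ω _ P _ B
  set M := (Finset.Icc 1 r).sup' (Finset.nonempty_Icc.mpr hr) fun k =>
    P.real {ω | -lam < B.S k ω + B.D k ω ∧ B.S k ω + B.D k ω ≤ lam}
  have hM : 0 ≤ M := (Finset.le_sup' _ (Finset.right_mem_Icc.mpr hr)).trans' measureReal_nonneg
  calc _ ≤ √((∫ ω, nneg (B.S r ω) ^ 2 ∂P) * (r * M)) :=
        abs_integral_mul_indicator_stayBelow_sub_le (fun k => (B.meas_S k).add (B.meas_D k))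
          (fun ω => nneg_nonneg _) (B.memLp_S hrT ENNReal.ofNat_ne_top).nneg hlam.le hr
    _ ≤ √(Q * ((nneg a + 1) ^ 2 * r) * (r * M)) := by
        gcongr
        exact B.integral_nneg_S_sq_le hδ0 hr hrT hba
    _ = √Q * (nneg a + 1) * r * √M := by
        rw [show Q * ((nneg a + 1) ^ 2 * r) * (r * M) = Q * ((nneg a + 1) * r) ^ 2 * M by ring,
          Real.sqrt_mul (by positivity), Real.sqrt_mul (by positivity),
          Real.sqrt_sq (mul_nonneg (by linarith [nneg_nonneg a]) r.cast_nonneg)]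
        ring

end
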